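/- Let G ∈ {C5, bull, gem, co-gem} and let (A,B) be a vertex partition of G with |A| < |B|, and let H = G ⊕ P for some P with (A,B) ∈ P ⊆ {(A,A),(B,B),(A,B)}. If H has a connected component on exactly two vertices, then either G is the gem, A consists of the two vertices of degree 2, and P = {(B,B),(A,B)}, or G is the bull, A consists of the two vertices of degree 3, and P = {(A,A),(A,B)}. -/

import Mathlib

open SimpleGraph Set

namespace FlipWidth

variable {V : Type*}

/-- The flip of a graph `G` by a pair `(A, B)` of vertex sets. -/
def flip (G : SimpleGraph V) (A B : Set V) : SimpleGraph V where
  Adj u v := u ≠ v ∧ Xor' ((u ∈ A ∧ v ∈ B) ∨ (u ∈ B ∧ v ∈ A)) (G.Adj u v)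
  symm := by
    constructor
    intro u v ⟨h, hx⟩
    refine ⟨h.symm, ?_⟩
    have := G.adj_comm u v
    unfold Xor' at *
    rw [← this, show ((v ∈ A ∧ u ∈ B) ∨ (v ∈ B ∧ u ∈ A)) = ((u ∈ A ∧ v ∈ B) ∨ (u ∈ B ∧ v ∈ A)) from propext (by tauto)]; exact hx
  loopless := by constructor; intro v h; exact h.1 rfl

/-- Whether a pair of vertex sets "crosses" the (unordered) pair of vertices `u, v`. -/
def crossPair (p : Set V × Set V) (u v : V) : Prop :=
  (u ∈ p.1 ∧ v ∈ p.2) ∨ (u ∈ p.2 ∧ v ∈ p.1)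

/-- The graph obtained from `G` by flipping every pair in `P` (order irrelevant
since flips commute: adjacency is toggled according to the parity of the number
of pairs in `P` crossing the two vertices). -/
def flips (G : SimpleGraph V) (P : Set (Set V × Set V)) : SimpleGraph V where
  Adj u v := u ≠ v ∧ Xor' (Odd {p ∈ P | crossPair p u v}.ncard) (G.Adj u v)
  symm := by
    constructor
    intro u v ⟨h, hx⟩
    refine ⟨h.symm, ?_⟩
    have hset : {p ∈ P | crossPair p v u} = {p ∈ P | crossPair p u v} := by
      ext p; unfold crossPair; constructor <;> (intro ⟨h1, h2⟩; exact ⟨h1, by tauto⟩)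
    rw [hset]
    have := G.adj_comm u v
    unfold Xor' at *
    rw [← this]; exact hx
  loopless := by constructor; intro v h; exact h.1 rfl

/-- `A` is complete to `B` in `G`. -/
def Complete (G : SimpleGraph V) (A B : Set V) : Prop :=
  ∀ a ∈ A, ∀ b ∈ B, G.Adj a b

/-- `A` is anti-complete to `B` in `G`. -/
def Anticomplete (G : SimpleGraph V) (A B : Set V) : Prop :=
  ∀ a ∈ A, ∀ b ∈ B, ¬ G.Adj a b

/-- `(V1, V2)` is a bi-join in `G`. -/
def IsBiJoin (G : SimpleGraph V) (V1 V2 : Set V) : Prop :=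
  ∃ W1 W2 : Set V, W1 ⊆ V1 ∧ W2 ⊆ V2 ∧
    Complete G W1 W2 ∧ Anticomplete G W1 (V2 \ W2) ∧
    Complete G (V1 \ W1) (V2 \ W2) ∧ Anticomplete G (V1 \ W1) W2

/-- `(W1, V1\W1, W2, V2\W2)` is a bi-join partition of `(V1, V2)`. -/
def IsBiJoinPartition (G : SimpleGraph V) (V1 V2 W1 W2 : Set V) : Prop :=
  W1 ⊆ V1 ∧ W2 ⊆ V2 ∧
    Complete G W1 W2 ∧ Anticomplete G W1 (V2 \ W2) ∧
    Complete G (V1 \ W1) (V2 \ W2) ∧ Anticomplete G (V1 \ W1) W2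

/-- Degree of a vertex, as the cardinality of its neighborhood. -/
noncomputable def ndeg (G : SimpleGraph V) (v : V) : ℕ := (G.neighborSet v).ncard

/-- `u` and `v` lie in two distinct sets among `A`, `B`, `C`. -/
def crossParts (A B C : Set V) (u v : V) : Prop :=
  (u ∈ A ∧ v ∈ B) ∨ (u ∈ B ∧ v ∈ A) ∨ (u ∈ A ∧ v ∈ C) ∨ (u ∈ C ∧ v ∈ A) ∨
    (u ∈ B ∧ v ∈ C) ∨ (u ∈ C ∧ v ∈ B)

/-- The cycle on 5 vertices. -/
def C5 : SimpleGraph (Fin 5) := SimpleGraph.fromRel (fun u v => v = u + 1)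

/-- The bull: a triangle `0,1,2` with pendant vertices `3` (at `0`) and `4` (at `1`). -/
def bull : SimpleGraph (Fin 5) :=
  SimpleGraph.fromRel (fun u v =>
    (u, v) ∈ ([(0,1),(1,2),(0,2),(0,3),(1,4)] : List (Fin 5 × Fin 5)))

/-- The gem: the path `0-1-2-3` plus a dominating vertex `4`. -/
def gem : SimpleGraph (Fin 5) :=
  SimpleGraph.fromRel (fun u v =>
    (u, v) ∈ ([(0,1),(1,2),(2,3),(4,0),(4,1),(4,2),(4,3)] : List (Fin 5 × Fin 5)))

/-- The co-gem: the path `0-1-2-3` plus an isolated vertex `4`. -/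
def cogem : SimpleGraph (Fin 5) :=
  SimpleGraph.fromRel (fun u v =>
    (u, v) ∈ ([(0,1),(1,2),(2,3)] : List (Fin 5 × Fin 5)))

/-- The four obstruction graphs. -/
def Fobs : Set (SimpleGraph (Fin 5)) := {C5, bull, gem, cogem}

end FlipWidth

/-! Since `A` and `Aᶜ` partition the vertices, every pair of distinct vertices is crossed by exactly
one of `(A, Aᶜ)`, `(A, A)`, `(Aᶜ, Aᶜ)`. Hence `G ⊕ P` toggles a pair exactly when some member of `P`
crosses it, and is determined by `A` and by which of `(A, A)`, `(Aᶜ, Aᶜ)` belong to `P`. A connected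
component on two vertices is an edge whose ends have no other neighbours, and whether such an edge
exists is decided in each of the finitely many remaining configurations. -/

theorem Set.eq_pair_of_subset_triple {α : Type*} {s : Set α} {x y z : α} (hs : s ⊆ {x, y, z})
    (hx : x ∉ s) (hy : y ∈ s) (hz : z ∈ s) : s = {y, z} := by
  refine Set.Subset.antisymm (fun p hp => ?_)
    (Set.insert_subset hy (Set.singleton_subset_iff.mpr hz))
  rcases hs hp with rfl | h
  · exact absurd hp hx
  · exact h

theorem odd_ncard_sep_iff_exists {α : Type*} {P : Set α} {Q : α → Prop}
    (h : {p ∈ P | Q p}.Subsingleton) : Odd {p ∈ P | Q p}.ncard ↔ ∃ p ∈ P, Q p := by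
  rcases h.eq_empty_or_singleton with h | ⟨x, hx⟩
  · simp only [h, Set.ncard_empty, Nat.not_odd_zero, false_iff]
    exact fun ⟨p, hp, hq⟩ => (Set.eq_empty_iff_forall_notMem.mp h) p ⟨hp, hq⟩
  · have hxP : x ∈ {p ∈ P | Q p} := hx ▸ rfl
    simp only [hx, Set.ncard_singleton, odd_one, true_iff]
    exact ⟨x, hxP.1, hxP.2⟩

namespace FlipWidth

section

variable {V : Type*}

def HasIsolatedEdge (R : V → V → Prop) : Prop :=
  ∃ u v, R u v ∧ ∀ w, (R u w → w = v) ∧ (R v w → w = u)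

instance [Fintype V] [DecidableEq V] (R : V → V → Prop) [DecidableRel R] :
    Decidable (HasIsolatedEdge R) :=
  inferInstanceAs (Decidable (∃ u v, R u v ∧ ∀ w, (R u w → w = v) ∧ (R v w → w = u)))

theorem hasIsolatedEdge_of_ncard_supp_eq_two {G : SimpleGraph V} (c : G.ConnectedComponent)
    (hc : c.supp.ncard = 2) : HasIsolatedEdge G.Adj := by
  obtain ⟨u, v, huv, hsupp⟩ := Set.ncard_eq_two.mp hc
  have hu : u ∈ c.supp := hsupp ▸ Set.mem_insert u {v}
  have hv : v ∈ c.supp := hsupp ▸ Set.mem_insert_of_mem u rfl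
  have nbr : ∀ x ∈ c.supp, ∀ w, G.Adj x w → w = u ∨ w = v := fun x hx w h => by
    simpa [hsupp] using c.mem_supp_of_adj_mem_supp hx h
  obtain ⟨p⟩ := c.reachable_of_mem_supp hu hv
  have hsnd := p.adj_snd (Walk.not_nil_of_ne huv)
  refine ⟨u, v, ?_, fun w => ⟨fun h => ?_, fun h => ?_⟩⟩
  · rwa [(nbr u hu _ hsnd).resolve_left hsnd.ne'] at hsnd
  · exact (nbr u hu w h).resolve_left h.ne'
  · exact (nbr v hv w h).resolve_right h.ne'

/-- The adjacency of `G ⊕ P` for `P` made of `(A, Aᶜ)`, together with `(A, A)` if `flipA` and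
`(Aᶜ, Aᶜ)` if `flipB`. -/
def crossFlipAdj (G : SimpleGraph V) (A : Set V) (flipA flipB : Prop) (u v : V) : Prop :=
  u ≠ v ∧ Xor ((u ∈ A ↔ v ∉ A) ∨ (flipA ∧ u ∈ A ∧ v ∈ A) ∨ (flipB ∧ u ∉ A ∧ v ∉ A)) (G.Adj u v)

instance [DecidableEq V] (G : SimpleGraph V) [DecidableRel G.Adj] (a : Finset V) (p q : Prop)
    [Decidable p] [Decidable q] : DecidableRel (crossFlipAdj G a p q) :=
  fun u v => inferInstanceAs (Decidable (u ≠ v ∧ Xor _ _))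

theorem crossPair_subsingleton {A : Set V} {P : Set (Set V × Set V)}
    (hP : P ⊆ {(A, A), (Aᶜ, Aᶜ), (A, Aᶜ)}) (u v : V) :
    {p ∈ P | crossPair p u v}.Subsingleton := by
  rintro p ⟨hp, hpc⟩ q ⟨hq, hqc⟩
  rcases hP hp with rfl | rfl | rfl <;> rcases hP hq with rfl | rfl | rfl <;>
    simp_all [crossPair]

theorem exists_crossPair_iff {A : Set V} {P : Set (Set V × Set V)} (hAB : (A, Aᶜ) ∈ P)
    (hP : P ⊆ {(A, A), (Aᶜ, Aᶜ), (A, Aᶜ)}) (u v : V) :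
    (∃ p ∈ P, crossPair p u v) ↔
      (u ∈ A ↔ v ∉ A) ∨ ((A, A) ∈ P ∧ u ∈ A ∧ v ∈ A) ∨ ((Aᶜ, Aᶜ) ∈ P ∧ u ∉ A ∧ v ∉ A) := by
  constructor
  · rintro ⟨p, hp, hpc⟩
    rcases hP hp with rfl | rfl | rfl
    all_goals simp only [crossPair, Set.mem_compl_iff] at hpc; tauto
  · rintro (h | h | h)
    · exact ⟨_, hAB, by simp only [crossPair, Set.mem_compl_iff]; tauto⟩
    · exact ⟨_, h.1, Or.inl h.2⟩
    · exact ⟨_, h.1, Or.inl h.2⟩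

theorem flips_adj_eq_crossFlipAdj {G : SimpleGraph V} {A : Set V} {P : Set (Set V × Set V)}
    (hAB : (A, Aᶜ) ∈ P) (hP : P ⊆ {(A, A), (Aᶜ, Aᶜ), (A, Aᶜ)}) :
    (flips G P).Adj = crossFlipAdj G A ((A, A) ∈ P) ((Aᶜ, Aᶜ) ∈ P) := by
  ext u v
  change (u ≠ v ∧ Xor _ _) ↔ (u ≠ v ∧ Xor _ _)
  rw [odd_ncard_sep_iff_exists (crossPair_subsingleton hP u v), exists_crossPair_iff hAB hP]

theorem ndeg_eq_degree (G : SimpleGraph V) (v : V) [Fintype (G.neighborSet v)] :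
    ndeg G v = G.degree v := by
  rw [ndeg, ← Nat.card_coe_set_eq, Nat.card_eq_fintype_card, card_neighborSet_eq_degree]

end

instance : DecidableRel C5.Adj := by unfold C5; infer_instance
instance : DecidableRel bull.Adj := by unfold bull; infer_instance
instance : DecidableRel gem.Adj := by unfold gem; infer_instance
instance : DecidableRel cogem.Adj := by unfold cogem; infer_instance

theorem C5_not_hasIsolatedEdge : ∀ a : Finset (Fin 5), a.card < aᶜ.card → ∀ fA fB : Bool,
    ¬ HasIsolatedEdge (crossFlipAdj C5 a fA fB) := by
  decide

theorem cogem_not_hasIsolatedEdge : ∀ a : Finset (Fin 5), a.card < aᶜ.card → ∀ fA fB : Bool,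
    ¬ HasIsolatedEdge (crossFlipAdj cogem a fA fB) := by
  decide

theorem bull_hasIsolatedEdge : ∀ a : Finset (Fin 5), a.card < aᶜ.card → ∀ fA fB : Bool,
    HasIsolatedEdge (crossFlipAdj bull a fA fB) → fA = true ∧ fB = false ∧ a = {0, 1} := by
  decide

theorem gem_hasIsolatedEdge : ∀ a : Finset (Fin 5), a.card < aᶜ.card → ∀ fA fB : Bool,
    HasIsolatedEdge (crossFlipAdj gem a fA fB) → fA = false ∧ fB = true ∧ a = {0, 3} := by
  decide

end FlipWidth

open FlipWidth in
/-- If `G ∈ {C5, bull, gem, cogem}`, `(A,B)` is a vertex partition of `G` with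
`|A| < |B|`, `(A,B) ∈ P ⊆ {(A,A),(B,B),(A,B)}` and `H = G ⊕ P` has a connected
component on exactly two vertices, then either `G` is the gem, `A` consists of
the two vertices of degree `2` and `P = {(B,B),(A,B)}`, or `G` is the bull, `A`
consists of the two vertices of degree `3` and `P = {(A,A),(A,B)}`. -/
theorem component_two_cross_flip :
    ∀ G ∈ Fobs, ∀ A B : Set (Fin 5), Disjoint A B → A ∪ B = Set.univ →
      A.ncard < B.ncard →
      ∀ P : Set (Set (Fin 5) × Set (Fin 5)),
        (A, B) ∈ P → P ⊆ {(A, A), (B, B), (A, B)} →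
      (∃ c : (flips G P).ConnectedComponent, c.supp.ncard = 2) →
      (G = gem ∧ (∃ x y : Fin 5, x ≠ y ∧ ndeg G x = 2 ∧ ndeg G y = 2 ∧
          A = {x, y}) ∧ P = {(B, B), (A, B)}) ∨
        (G = bull ∧ (∃ x y : Fin 5, x ≠ y ∧ ndeg G x = 3 ∧ ndeg G y = 3 ∧
          A = {x, y}) ∧ P = {(A, A), (A, B)}) := by
  intro G hG A B hdis huniv hcard P hAB hP ⟨c, hc⟩
  obtain rfl : B = Aᶜ := (IsCompl.compl_eq ⟨hdis, codisjoint_iff.mpr huniv⟩).symm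
  obtain ⟨a, rfl⟩ := (Set.toFinite A).exists_finset_coe
  have hcard' : a.card < aᶜ.card := by
    rwa [← Finset.coe_compl, Set.ncard_coe_finset, Set.ncard_coe_finset] at hcard
  classical
  obtain ⟨fA, hfA⟩ : ∃ b : Bool, (b = true) = ((↑a, ↑a) ∈ P) := ⟨_, propext decide_eq_true_iff⟩
  obtain ⟨fB, hfB⟩ : ∃ b : Bool, (b = true) = (((↑a)ᶜ, (↑a)ᶜ) ∈ P) :=
    ⟨_, propext decide_eq_true_iff⟩
  have hedge := hasIsolatedEdge_of_ncard_supp_eq_two c hc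
  rw [flips_adj_eq_crossFlipAdj hAB hP, ← hfA, ← hfB] at hedge
  simp only [Fobs, Set.mem_insert_iff, Set.mem_singleton_iff] at hG
  rcases hG with rfl | rfl | rfl | rfl
  · exact absurd hedge (C5_not_hasIsolatedEdge a hcard' fA fB)
  · obtain ⟨rfl, rfl, rfl⟩ := bull_hasIsolatedEdge a hcard' fA fB hedge
    rw [Set.insert_comm] at hP
    refine Or.inr ⟨rfl, ⟨0, 1, by decide, by rw [ndeg_eq_degree]; decide,
      by rw [ndeg_eq_degree]; decide, by simp⟩, Set.eq_pair_of_subset_triple hP ?_ ?_ hAB⟩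
    · exact fun h => Bool.false_ne_true (hfB.mpr h)
    · exact hfA.mp rfl
  · obtain ⟨rfl, rfl, rfl⟩ := gem_hasIsolatedEdge a hcard' fA fB hedge
    refine Or.inl ⟨rfl, ⟨0, 3, by decide, by rw [ndeg_eq_degree]; decide,
      by rw [ndeg_eq_degree]; decide, by simp⟩, Set.eq_pair_of_subset_triple hP ?_ ?_ hAB⟩
    · exact fun h => Bool.false_ne_true (hfA.mpr h)
    · exact hfB.mp rfl
  · exact absurd hedge (cogem_not_hasIsolatedEdge a hcard' fA fB)
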